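/- arXiv:2008.08646 — 2 statements merged into one kernel-verified Lean document; each statement's English description precedes it below -/
import Mathlib

section
/- Let Γ be a simple digraph on n vertices and k an integer with Z(Γ) ≤ k ≤ n. Then pt_k(Γ) = pt_k(Γᵀ), where pt_k denotes the minimum propagation time over zero forcing sets of size exactly k. -/
/-!
Fix a zero forcing set `B` of `Γ` with propagation time `p`, and record for every vertex `y ∉ B`
the round `time y` in which it turns blue and a vertex `forcer y` forcing it. Forcing chains do not
branch, so `forcer` is injective on `Bᶜ` and the set of vertices that never force has size `|B|`.
In `Γᵀ` this set forces the chains backwards: `y` forces `forcer y` in round `p + 1 - time y`.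
Hence `pt_k(Γᵀ) ≤ pt_k(Γ)`, and the reverse inequality is the same statement for `Γᵀ`.
-/

open Set

/-- One time step of standard zero forcing on a digraph with arc relation `A`:
every blue vertex having a unique white out-neighbor forces it blue. -/
def dstep {V : Type*} (A : V → V → Prop) (S : Set V) : Set V :=
  S ∪ {w | ∃ u ∈ S, A u w ∧ ∀ x, A u x → x ∉ S → x = w}

/-- `B` is a zero forcing set of the digraph with arc relation `A`. -/
def IsZFS {V : Type*} (A : V → V → Prop) (B : Set V) : Prop :=
  ∃ t, (dstep A)^[t] B = Set.univ

/-- Propagation time of `B` in the digraph with arc relation `A`. -/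
noncomputable def dpt {V : Type*} (A : V → V → Prop) (B : Set V) : ℕ :=
  sInf {t | (dstep A)^[t] B = Set.univ}

/-- The throttling number of the digraph with arc relation `A`. -/
noncomputable def dth {V : Type*} (A : V → V → Prop) : ℕ :=
  sInf {k | ∃ B : Set V, IsZFS A B ∧ k = B.ncard + dpt A B}

/-- The zero forcing number. -/
noncomputable def Znum {V : Type*} (A : V → V → Prop) : ℕ :=
  sInf {k | ∃ B : Set V, IsZFS A B ∧ B.ncard = k}

/-- The `k`-propagation time: minimum propagation time over zero forcing sets of size `k`. -/
noncomputable def ptk {V : Type*} (A : V → V → Prop) (k : ℕ) : ℕ :=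
  sInf {t | ∃ B : Set V, IsZFS A B ∧ B.ncard = k ∧ dpt A B = t}

section

variable {V : Type*} {A : V → V → Prop} {B : Set V} {p : ℕ}

theorem monotone_iterate_dstep (A : V → V → Prop) (B : Set V) :
    Monotone fun t => (dstep A)^[t] B :=
  fun _ _ h => Function.monotone_iterate_of_id_le (fun _ => subset_union_left) h B

/-- A chronological record of a zero forcing process from `B` finishing within `p` rounds:
`forcer y` forces `y` in round `time y`. -/
structure ForcingSchedule (A : V → V → Prop) (B : Set V) (p : ℕ) where
  time : V → ℕ
  forcer : V → V
  time_le : ∀ v, time v ≤ p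
  time_pos : ∀ y ∉ B, 0 < time y
  forcer_adj : ∀ y ∉ B, A (forcer y) y
  time_forcer_lt : ∀ y ∉ B, time (forcer y) < time y
  time_lt_of_forcer_adj : ∀ y ∉ B, ∀ x, A (forcer y) x → x ≠ y → time x < time y

theorem ForcingSchedule.nonempty (hp : (dstep A)^[p] B = univ) :
    Nonempty (ForcingSchedule A B p) := by
  classical
  have hex : ∀ v, ∃ t, v ∈ (dstep A)^[t] B := fun v => ⟨p, hp ▸ mem_univ v⟩
  set time : V → ℕ := fun v => Nat.find (hex v)
  have mem_iff : ∀ v t, v ∈ (dstep A)^[t] B ↔ time v ≤ t := fun v t =>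
    ⟨Nat.find_min' (hex v), fun h => monotone_iterate_dstep A B h (Nat.find_spec (hex v))⟩
  have time_pos : ∀ y ∉ B, 0 < time y := fun y hy =>
    Nat.pos_of_ne_zero fun h0 => hy ((mem_iff y 0).2 h0.le)
  have forced : ∀ y ∉ B, ∃ u, A u y ∧ time u < time y ∧
      ∀ x, A u x → x ≠ y → time x < time y := by
    intro y hy
    obtain ⟨m, hm⟩ := Nat.exists_eq_add_one_of_ne_zero (time_pos y hy).ne'
    have hy' : y ∈ dstep A ((dstep A)^[m] B) := by
      rw [← Function.iterate_succ_apply' (dstep A)]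
      exact (mem_iff y (m + 1)).2 hm.le
    rcases hy' with hym | ⟨u, hu, huy, hunique⟩
    · have := (mem_iff y m).1 hym
      omega
    · refine ⟨u, huy, by have := (mem_iff u m).1 hu; omega, fun x hux hxy => ?_⟩
      have := (mem_iff x m).1 (not_not.1 fun hx => hxy (hunique x hux hx))
      omega
  choose! forcer forcer_adj time_forcer_lt time_lt_of_forcer_adj using forced
  exact ⟨⟨time, forcer, fun v => (mem_iff v p).1 (hp ▸ mem_univ v), time_pos, forcer_adj,
    time_forcer_lt, time_lt_of_forcer_adj⟩⟩

namespace ForcingSchedule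

variable (σ : ForcingSchedule A B p)

def terminals : Set V := (σ.forcer '' Bᶜ)ᶜ

theorem injOn_forcer : InjOn σ.forcer Bᶜ := by
  intro y hy y' hy' h
  by_contra hne
  have h₁ := σ.time_lt_of_forcer_adj y hy y' (h ▸ σ.forcer_adj y' hy') (Ne.symm hne)
  have h₂ := σ.time_lt_of_forcer_adj y' hy' y (h ▸ σ.forcer_adj y hy) hne
  omega

theorem ncard_terminals [Finite V] : σ.terminals.ncard = B.ncard := by
  rw [terminals, ncard_compl, σ.injOn_forcer.ncard_image, ncard_compl,
    Nat.sub_sub_self (ncard_le_card B)]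

theorem exists_forcer_eq_of_notMem_terminals {v : V} (hv : v ∉ σ.terminals) :
    ∃ z ∉ B, σ.forcer z = v := by
  simpa [terminals] using hv

theorem terminals_subset_iterate (t : ℕ) :
    σ.terminals ⊆ (dstep (flip A))^[t] σ.terminals :=
  monotone_iterate_dstep (flip A) σ.terminals (Nat.zero_le t)

theorem forcer_mem_iterate_flip (y : V) (hy : y ∉ B) :
    σ.forcer y ∈ (dstep (flip A))^[p + 1 - σ.time y] σ.terminals := by
  set R := fun t => (dstep (flip A))^[t] σ.terminals
  have hR : Monotone R := monotone_iterate_dstep (flip A) σ.terminals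
  induction hn : p + 1 - σ.time y using Nat.strong_induction_on generalizing y with
  | _ n ih =>
  have hpos := σ.time_pos y hy
  have hle := σ.time_le y
  have later : ∀ z ∉ B, σ.time y < σ.time z → σ.forcer z ∈ R (p - σ.time y) := fun z hz hlt =>
    have := σ.time_le z
    hR (by omega) (ih _ (by omega) z hz rfl)
  obtain rfl : n = (p - σ.time y) + 1 := by omega
  rw [Function.iterate_succ_apply']
  refine Or.inr ⟨y, ?_, σ.forcer_adj y hy, fun x hyx hx => ?_⟩
  · by_cases hyT : y ∈ σ.terminals
    · exact σ.terminals_subset_iterate _ hyT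
    · obtain ⟨z, hz, rfl⟩ := σ.exists_forcer_eq_of_notMem_terminals hyT
      exact later z hz (σ.time_forcer_lt z hz)
  · have hxT : x ∉ σ.terminals := fun h => hx (σ.terminals_subset_iterate _ h)
    obtain ⟨z, hz, rfl⟩ := σ.exists_forcer_eq_of_notMem_terminals hxT
    have hzy : σ.time z ≤ σ.time y := not_lt.1 fun hlt => hx (later z hz hlt)
    by_contra hne
    have := σ.time_lt_of_forcer_adj z hz y hyx fun h => hne (h ▸ rfl)
    omega

theorem iterate_flip_terminals : (dstep (flip A))^[p] σ.terminals = univ := by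
  refine eq_univ_of_forall fun v => ?_
  by_cases hv : v ∈ σ.terminals
  · exact σ.terminals_subset_iterate p hv
  · obtain ⟨z, hz, rfl⟩ := σ.exists_forcer_eq_of_notMem_terminals hv
    exact monotone_iterate_dstep (flip A) σ.terminals (Nat.sub_le_of_le_add (by
      have := σ.time_pos z hz; omega)) (σ.forcer_mem_iterate_flip z hz)

end ForcingSchedule

theorem exists_isZFS_flip [Finite V] (hB : IsZFS A B) :
    ∃ B', IsZFS (flip A) B' ∧ B'.ncard = B.ncard ∧ dpt (flip A) B' ≤ dpt A B := by
  obtain ⟨σ⟩ := ForcingSchedule.nonempty (Nat.sInf_mem hB : (dstep A)^[dpt A B] B = univ)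
  exact ⟨σ.terminals, ⟨_, σ.iterate_flip_terminals⟩, σ.ncard_terminals,
    Nat.sInf_le σ.iterate_flip_terminals⟩

theorem exists_dpt_flip_le [Finite V] (k : ℕ) :
    ∀ t ∈ {t | ∃ B : Set V, IsZFS A B ∧ B.ncard = k ∧ dpt A B = t},
      ∃ t' ∈ {t | ∃ B : Set V, IsZFS (flip A) B ∧ B.ncard = k ∧ dpt (flip A) B = t}, t' ≤ t := by
  rintro _ ⟨B, hB, rfl, rfl⟩
  obtain ⟨B', hB', hcard, hle⟩ := exists_isZFS_flip hB
  exact ⟨_, ⟨B', hB', hcard, rfl⟩, hle⟩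

end

theorem stmt3_general {V : Type*} [Fintype V] (A : V → V → Prop) (k : ℕ) :
    ptk A k = ptk (flip A) k :=
  csInf_eq_csInf_of_forall_exists_le (exists_dpt_flip_le k) (exists_dpt_flip_le (A := flip A) k)

/-- For `Z(Γ) ≤ k ≤ n`, the `k`-propagation times of a digraph and its transpose agree. -/
theorem stmt3 {V : Type*} [Fintype V] (A : V → V → Prop) (hirr : Irreflexive A)
    (k : ℕ) (hk1 : Znum A ≤ k) (hk2 : k ≤ Fintype.card V) :
    ptk A k = ptk (flip A) k :=
  stmt3_general A k
end

section
/- For every n ≥ 1 there exists an orientation K⃗ₙ of the complete graph Kₙ with th(K⃗ₙ) = ⌈2√n − 1⌉. -/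
open Set

/-- `A` is an orientation of the simple graph `G`: every arc lies on an edge of `G`,
and each edge of `G` gets exactly one direction. -/
def IsOrientation {V : Type*} (G : SimpleGraph V) (A : V → V → Prop) : Prop :=
  (∀ u v, A u v → G.Adj u v) ∧ ∀ u v, G.Adj u v → (A u v ↔ ¬ A v u)

/-!
Lower bound: call a blue vertex with a white out-neighbour *active*. A vertex that has forced is
never active again, so a newly blue vertex can only be active in place of its forcer, and the
number of active vertices never exceeds `|B|`. Hence at most `|B|` vertices turn blue per step,
`n ≤ |B| (pt(B) + 1)`, and AM–GM gives `|B| + pt(B) ≥ 2√n - 1`.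

Upper bound: with `K = ⌈m/2⌉` for `m = ⌈2√n - 1⌉`, orient `u → u + K` and every other edge
backwards. Starting from `{0, …, K - 1}`, each step colours the next block of `K` vertices, each
forced by its predecessor `K` places back, and `⌊m/2⌋` steps suffice.
-/

section Forcing

variable {V : Type*} {A : V → V → Prop} {S : Set V} {u w : V}

def Forces (A : V → V → Prop) (S : Set V) (u w : V) : Prop :=
  u ∈ S ∧ A u w ∧ ∀ x, A u x → x ∉ S → x = w

def activeSet (A : V → V → Prop) (S : Set V) : Set V :=
  {u | u ∈ S ∧ ∃ x, A u x ∧ x ∉ S}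

lemma subset_dstep (A : V → V → Prop) (S : Set V) : S ⊆ dstep A S :=
  Set.subset_union_left

lemma exists_forces_of_mem_dstep_diff (hw : w ∈ dstep A S \ S) : ∃ u, Forces A S u w := by
  obtain ⟨hw | ⟨u, hu, huw, huniq⟩, hwS⟩ := hw
  · exact absurd hw hwS
  · exact ⟨u, hu, huw, huniq⟩

lemma Forces.mem_dstep (h : Forces A S u w) : w ∈ dstep A S :=
  Or.inr ⟨u, h⟩

lemma Forces.eq (h : Forces A S u w) {w' : V} (h' : Forces A S u w') (hw' : w' ∉ S) : w' = w :=
  h.2.2 w' h'.2.1 hw'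

lemma Forces.mem_activeSet (h : Forces A S u w) (hwS : w ∉ S) : u ∈ activeSet A S :=
  ⟨h.1, w, h.2.1, hwS⟩

lemma Forces.notMem_activeSet_dstep (h : Forces A S u w) : u ∉ activeSet A (dstep A S) := by
  rintro ⟨-, x, hux, hx⟩
  have hxS : x ∉ S := fun hxS ↦ hx (subset_dstep A S hxS)
  exact hx (h.2.2 x hux hxS ▸ h.mem_dstep)

variable [Finite V]

lemma ncard_dstep_le (A : V → V → Prop) (S : Set V) :
    (dstep A S).ncard ≤ S.ncard + (activeSet A S).ncard := by
  have hforcer : ∀ w ∈ dstep A S \ S, ∃ u, Forces A S u w :=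
    fun _ ↦ exists_forces_of_mem_dstep_diff
  choose! f hf using hforcer
  have hnew : (dstep A S \ S).ncard ≤ (activeSet A S).ncard :=
    Set.ncard_le_ncard_of_injOn f (fun w hw ↦ (hf w hw).mem_activeSet hw.2)
      (fun w hw w' hw' hff ↦ ((hf w hw).eq (hff ▸ hf w' hw') hw'.2).symm)
  rw [← Set.ncard_sdiff_add_ncard_of_subset (subset_dstep A S)]
  omega

lemma ncard_activeSet_dstep_le (A : V → V → Prop) (S : Set V) :
    (activeSet A (dstep A S)).ncard ≤ (activeSet A S).ncard := by
  classical
  have hforcer : ∀ w ∈ dstep A S \ S, ∃ u, Forces A S u w :=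
    fun _ ↦ exists_forces_of_mem_dstep_diff
  choose! f hf using hforcer
  -- an active vertex that was already blue stays put; a newly blue one is sent to its forcer
  let g : V → V := fun u ↦ if u ∈ S then u else f u
  have hg : ∀ u ∈ activeSet A (dstep A S), u ∉ S → Forces A S (f u) u :=
    fun u hu huS ↦ hf u ⟨hu.1, huS⟩
  refine Set.ncard_le_ncard_of_injOn g (fun u hu ↦ ?_) (fun u hu u' hu' hgg ↦ ?_)
  · by_cases huS : u ∈ S
    · obtain ⟨-, x, hux, hx⟩ := hu
      simp only [g, if_pos huS]
      exact ⟨huS, x, hux, fun hxS ↦ hx (subset_dstep A S hxS)⟩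
    · simp only [g, if_neg huS]
      exact (hg u hu huS).mem_activeSet huS
  · by_cases huS : u ∈ S <;> by_cases hu'S : u' ∈ S <;>
      simp only [g, huS, hu'S, if_true, if_false] at hgg
    · exact hgg
    · exact absurd (hgg ▸ hu) (hg u' hu' hu'S).notMem_activeSet_dstep
    · exact absurd (hgg ▸ hu') (hg u hu huS).notMem_activeSet_dstep
    · exact ((hg u hu huS).eq (hgg ▸ hg u' hu' hu'S) hu'S).symm

lemma ncard_activeSet_iterate_dstep_le (A : V → V → Prop) (B : Set V) (s : ℕ) :
    (activeSet A ((dstep A)^[s] B)).ncard ≤ B.ncard := by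
  induction s with
  | zero => exact Set.ncard_le_ncard (fun u hu ↦ hu.1)
  | succ s ih =>
    rw [Function.iterate_succ_apply']
    exact (ncard_activeSet_dstep_le A _).trans ih

lemma ncard_iterate_dstep_le (A : V → V → Prop) (B : Set V) (s : ℕ) :
    ((dstep A)^[s] B).ncard ≤ B.ncard * (s + 1) := by
  induction s with
  | zero => simp
  | succ s ih =>
    rw [Function.iterate_succ_apply']
    calc (dstep A ((dstep A)^[s] B)).ncard
        ≤ ((dstep A)^[s] B).ncard + (activeSet A ((dstep A)^[s] B)).ncard :=
          ncard_dstep_le A _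
      _ ≤ B.ncard * (s + 1) + B.ncard := add_le_add ih (ncard_activeSet_iterate_dstep_le A B s)
      _ = B.ncard * (s + 1 + 1) := by ring

end Forcing

section Throttling

variable {V : Type*} {A : V → V → Prop} {B : Set V}

lemma iterate_dpt_eq_univ (hB : IsZFS A B) : (dstep A)^[dpt A B] B = univ :=
  Nat.sInf_mem hB

lemma card_le_ncard_mul_dpt_add_one [Finite V] (hB : IsZFS A B) :
    Nat.card V ≤ B.ncard * (dpt A B + 1) := by
  simpa [iterate_dpt_eq_univ hB] using ncard_iterate_dstep_le A B (dpt A B)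

lemma ceil_two_sqrt_sub_one_le_add {n k t : ℕ} (h : n ≤ k * (t + 1)) :
    ⌈2 * √n - 1⌉₊ ≤ k + t := by
  rw [Nat.ceil_le]
  have hn : (n : ℝ) ≤ k * (t + 1) := by exact_mod_cast h
  have hsqrt : √n ≤ (k + t + 1) / 2 := by
    rw [Real.sqrt_le_left (by positivity)]
    nlinarith [sq_nonneg ((k : ℝ) - t - 1)]
  push_cast
  linarith

theorem ceil_two_sqrt_sub_one_le_dth [Finite V] (A : V → V → Prop) :
    ⌈2 * √(Nat.card V) - 1⌉₊ ≤ dth A := by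
  refine le_csInf ⟨_, univ, ⟨0, rfl⟩, rfl⟩ ?_
  rintro _ ⟨B, hB, rfl⟩
  exact ceil_two_sqrt_sub_one_le_add (card_le_ncard_mul_dpt_add_one hB)

lemma dth_le_of_iterate_eq_univ {t : ℕ} (h : (dstep A)^[t] B = univ) :
    dth A ≤ B.ncard + t := by
  have hdth : dth A ≤ B.ncard + dpt A B := Nat.sInf_le ⟨B, ⟨t, h⟩, rfl⟩
  have hdpt : dpt A B ≤ t := Nat.sInf_le h
  omega

end Throttling

section ShiftTournament

variable {n K : ℕ}

def shiftTournament (n K : ℕ) (u v : Fin n) : Prop :=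
  (v : ℕ) = u + K ∨ ((v : ℕ) < u ∧ (v : ℕ) + K ≠ u)

lemma isOrientation_shiftTournament (hK : 0 < K) :
    IsOrientation (⊤ : SimpleGraph (Fin n)) (shiftTournament n K) := by
  refine ⟨fun u v huv ↦ ?_, fun u v huv ↦ ?_⟩
  · rw [SimpleGraph.top_adj, ← Fin.val_ne_iff]
    unfold shiftTournament at huv
    omega
  · rw [SimpleGraph.top_adj, ← Fin.val_ne_iff] at huv
    unfold shiftTournament
    omega

lemma dstep_shiftTournament_lt {c : ℕ} (hKc : K ≤ c) :
    dstep (shiftTournament n K) {v : Fin n | (v : ℕ) < c} = {v : Fin n | (v : ℕ) < c + K} := by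
  ext v
  simp only [dstep, shiftTournament, Set.mem_union, Set.mem_ofPred_eq]
  constructor
  · rintro (hv | ⟨u, hu, huv, -⟩) <;> omega
  · intro hv
    by_cases hvc : (v : ℕ) < c
    · exact Or.inl hvc
    -- `v` is forced by `v - K`, whose other out-neighbours lie below it
    refine Or.inr ⟨⟨v - K, by omega⟩, by simp only; omega, by simp only; omega,
      fun x hx hxc ↦ ?_⟩
    simp only at hx
    exact Fin.ext (by omega)

lemma iterate_dstep_shiftTournament (s : ℕ) :
    (dstep (shiftTournament n K))^[s] {v : Fin n | (v : ℕ) < K} =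
      {v : Fin n | (v : ℕ) < K * (s + 1)} := by
  induction s with
  | zero => simp
  | succ s ih =>
    rw [Function.iterate_succ_apply', ih,
      dstep_shiftTournament_lt (Nat.le_mul_of_pos_right K s.succ_pos),
      show K * (s + 1 + 1) = K * (s + 1) + K by ring]

end ShiftTournament

lemma ncard_fin_val_lt_le (n K : ℕ) : {v : Fin n | (v : ℕ) < K}.ncard ≤ K := by
  simpa using Set.ncard_le_ncard_of_injOn (s := {v : Fin n | (v : ℕ) < K}) (t := Set.Iio K)
    Fin.val (fun v hv ↦ hv) Fin.val_injective.injOn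

lemma four_mul_le_sq_ceil_two_sqrt_sub_one_add_one (n : ℕ) :
    4 * n ≤ (⌈2 * √n - 1⌉₊ + 1) ^ 2 := by
  have hceil : 2 * √n ≤ ⌈2 * √n - 1⌉₊ + 1 := by linarith [Nat.le_ceil (2 * √n - 1)]
  have hsq : (2 * √n) ^ 2 ≤ ((⌈2 * √n - 1⌉₊ + 1 : ℕ) : ℝ) ^ 2 := by
    push_cast
    exact pow_le_pow_left₀ (by positivity) hceil 2
  rw [mul_pow, Real.sq_sqrt n.cast_nonneg] at hsq
  exact_mod_cast hsq

lemma le_mul_of_four_mul_le_sq {n m : ℕ} (h : 4 * n ≤ (m + 1) ^ 2) :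
    n ≤ (m + 1) / 2 * (m / 2 + 1) := by
  obtain ⟨r, rfl | rfl⟩ := Nat.even_or_odd' m
  · rw [show (2 * r + 1) / 2 = r by omega, show 2 * r / 2 = r by omega]
    nlinarith
  · rw [show (2 * r + 1 + 1) / 2 = r + 1 by omega, show (2 * r + 1) / 2 = r by omega]
    nlinarith

/-- For every `n ≥ 1` there is an orientation of the complete graph `Kₙ` whose throttling
number is `⌈2√n - 1⌉`. -/
theorem stmt15 (n : ℕ) (hn : 1 ≤ n) :
    ∃ A : Fin n → Fin n → Prop,
      IsOrientation (⊤ : SimpleGraph (Fin n)) A ∧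
      dth A = ⌈2 * Real.sqrt n - 1⌉₊ := by
  set m := ⌈2 * √n - 1⌉₊
  have hsq : 4 * n ≤ (m + 1) ^ 2 := four_mul_le_sq_ceil_two_sqrt_sub_one_add_one n
  set K := (m + 1) / 2
  have hm : m ≠ 0 := by
    rintro hm
    rw [hm] at hsq
    omega
  have hK : 0 < K := by omega
  have hcover : (dstep (shiftTournament n K))^[m / 2] {v : Fin n | (v : ℕ) < K} = univ := by
    rw [iterate_dstep_shiftTournament, Set.eq_univ_iff_forall]
    exact fun v ↦ v.2.trans_le (le_mul_of_four_mul_le_sq hsq)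
  refine ⟨shiftTournament n K, isOrientation_shiftTournament hK, le_antisymm ?_ ?_⟩
  · calc dth (shiftTournament n K) ≤ {v : Fin n | (v : ℕ) < K}.ncard + m / 2 :=
          dth_le_of_iterate_eq_univ hcover
      _ ≤ K + m / 2 := Nat.add_le_add_right (ncard_fin_val_lt_le n K) _
      _ = m := by omega
  · simpa only [Nat.card_eq_fintype_card, Fintype.card_fin] using
      ceil_two_sqrt_sub_one_le_dth (shiftTournament n K)
end
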